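/- arXiv:1612.01182 — 2 statements merged into one kernel-verified Lean document; each statement's English description precedes it below -/
import Mathlib

section
/- For δ ≥ 1, the function l_δ(θ) = sin(θ(δ - 1/2))/sin(θ/2) is non-increasing on the interval (0, 2π/(2δ - 1)]. -/
open Real

lemma dirichlet (δ : ℕ) (θ : ℝ) :
    Real.sin (θ * ((δ:ℝ) - 1/2)) =
      Real.sin (θ/2) * (2 * ∑ k ∈ Finset.range δ, Real.cos (k * θ) - 1) := by
  induction δ with
  | zero =>
    rw [show θ * ((0:ℕ) - 1/2 : ℝ) = -(θ/2) by push_cast; ring, Real.sin_neg]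
    simp
  | succ n ih =>
    have h2 : θ * ((n:ℝ) - 1/2) = θ * n - θ/2 := by ring
    rw [h2, Real.sin_sub] at ih
    rw [Finset.sum_range_succ]
    push_cast
    rw [show θ * ((n:ℝ) + 1 - 1/2) = θ * n + θ/2 by ring, Real.sin_add,
      show (n:ℝ) * θ = θ * n by ring]
    linarith [ih]

theorem stmt_4 (δ : ℕ) (hδ : 1 ≤ δ) :
    AntitoneOn (fun θ : ℝ => Real.sin (θ * ((δ:ℝ) - 1/2)) / Real.sin (θ/2))
      (Set.Ioc 0 (2 * π / (2 * (δ:ℝ) - 1))) := by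
  have hδR : (1:ℝ) ≤ (δ:ℝ) := by exact_mod_cast hδ
  have hd1 : (1:ℝ) ≤ 2 * (δ:ℝ) - 1 := by linarith
  have hdpos : (0:ℝ) < 2 * (δ:ℝ) - 1 := by linarith
  have hbound : 2 * π / (2 * (δ:ℝ) - 1) ≤ 2 * π :=
    div_le_self (by positivity) hd1
  set g : ℝ → ℝ := fun θ => 2 * ∑ k ∈ Finset.range δ, Real.cos (k * θ) - 1 with hg
  have hfg : ∀ θ : ℝ, 0 < θ → θ < 2 * π →
      Real.sin (θ * ((δ:ℝ) - 1/2)) / Real.sin (θ/2) = g θ := by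
    intro θ h0 h2pi
    have hs : 0 < Real.sin (θ/2) :=
      Real.sin_pos_of_pos_of_lt_pi (by linarith) (by linarith)
    rw [dirichlet, mul_div_cancel_left₀ _ hs.ne']
  have hganti : ∀ x ∈ Set.Ioc (0:ℝ) (2 * π / (2 * (δ:ℝ) - 1)),
      ∀ y ∈ Set.Ioc (0:ℝ) (2 * π / (2 * (δ:ℝ) - 1)), x ≤ y → g y ≤ g x := by
    intro x hx y hy hxy
    have hsum : ∀ k ∈ Finset.range δ, Real.cos ((k:ℝ) * y) ≤ Real.cos ((k:ℝ) * x) := by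
      intro k hk
      have hkδ : (k:ℝ) ≤ (δ:ℝ) - 1 := by
        have h1 := Finset.mem_range.mp hk
        have : (k:ℝ) + 1 ≤ (δ:ℝ) := by exact_mod_cast h1
        linarith
      have hk0 : (0:ℝ) ≤ (k:ℝ) := Nat.cast_nonneg k
      apply Real.cos_le_cos_of_nonneg_of_le_pi
      · exact mul_nonneg hk0 hx.1.le
      · have h1 : (k:ℝ) * y ≤ (k:ℝ) * (2 * π / (2 * (δ:ℝ) - 1)) :=
          mul_le_mul_of_nonneg_left hy.2 hk0
        have h2 : (k:ℝ) * (2 * π / (2 * (δ:ℝ) - 1)) ≤ π := by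
          rw [mul_div_assoc', div_le_iff₀ hdpos]
          nlinarith [Real.pi_pos]
        linarith
      · exact mul_le_mul_of_nonneg_left hxy hk0
    have := Finset.sum_le_sum hsum
    simp only [hg]
    linarith
  intro x hx y hy hxy
  have hy2π : y ≤ 2 * π := le_trans hy.2 hbound
  rcases eq_or_lt_of_le hy2π with heq | hlt
  · rcases eq_or_lt_of_le hxy with hxeq | hxlt
    · simp [hxeq]
    have hδ1 : δ = 1 := by
      by_contra h
      have h2 : 2 ≤ δ := by omega
      have h2R : (2:ℝ) ≤ (δ:ℝ) := by exact_mod_cast h2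
      have hlt2 : 2 * π / (2 * (δ:ℝ) - 1) < 2 * π := by
        apply div_lt_self (by positivity); linarith
      have hyle := hy.2
      rw [heq] at hyle
      linarith
    subst hδ1
    have hfy : Real.sin (y * (((1:ℕ):ℝ) - 1/2)) / Real.sin (y/2) = 0 := by
      rw [heq, show (2*π) * (((1:ℕ):ℝ) - 1/2) = π by push_cast; ring,
        show (2*π)/2 = π by ring, Real.sin_pi]
      simp
    have hfx : Real.sin (x * (((1:ℕ):ℝ) - 1/2)) / Real.sin (x/2) = g x := by
      apply hfg x hx.1
      calc x < y := hxlt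
        _ = 2 * π := heq
    show Real.sin (y * (((1:ℕ):ℝ) - 1/2)) / Real.sin (y/2) ≤ Real.sin (x * (((1:ℕ):ℝ) - 1/2)) / Real.sin (x/2)
    rw [hfy, hfx]
    have hgx : g x = 1 := by simp [hg]; norm_num
    rw [hgx]
    norm_num
  · have hx2π : x < 2 * π := lt_of_le_of_lt hxy hlt
    simp only
    rw [hfg x hx.1 hx2π, hfg y hy.1 hlt]
    exact hganti x hx y hy hxy
end

section
/- Let X_0 = x_0 x_0^* for a nonzero x_0 ∈ ℂ^d, and let X ∈ ℂ^{d×d} be Hermitian with ||X - X_0||_F ≤ η ||x_0||_2^2 for some η ≥ 0. Let λ_1 be the largest-magnitude eigenvalue of X with unit eigenvector v_1. Then min_{θ ∈ [0,2π]} || e^{iθ} x_0 - √|λ_1| v_1 ||_2 ≤ (1 + 2√2) η ||x_0||_2. -/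
/-!
Write `x₀ = α v₁ + w` with `w ⊥ v₁`. Testing the perturbation `E = X - x₀x₀*` on `v₁` gives
`|λ - |α|²| ≤ ε` and `|α| ‖w‖ ≤ ε`, where `ε = ‖E‖_F`. Testing it on `x₀` shows that `‖x₀‖²` is
within `ε` of an eigenvalue of `X` (a Weyl-type bound), so `|λ| ≥ ‖x₀‖² - ε` by maximality of `|λ|`.
For the phase `e^{-i arg α}` the error vector is `(|α| - √|λ|) v₁ + e^{-i arg α} w`, and elementary
estimates bound its squared norm times `‖x₀‖²` by `7ε²`; finally `√7 ≤ 1 + 2√2`.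
-/

open Real Complex Matrix Module End

-- Applied with `a = ‖⟪v₁, x₀⟫‖`, `b` the norm of the part of `x₀` orthogonal to `v₁`, `r = √|λ|`.
theorem sub_sq_add_sq_mul_le {a b r lam ε : ℝ} (ha : 0 ≤ a) (hb : 0 ≤ b) (hr : 0 ≤ r)
    (hr2 : r ^ 2 = |lam|) (hlam : |lam - a ^ 2| ≤ ε) (hab : a * b ≤ ε)
    (hlow : a ^ 2 + b ^ 2 - ε ≤ |lam|) :
    ((a - r) ^ 2 + b ^ 2) * (a ^ 2 + b ^ 2) ≤ 7 * ε ^ 2 := by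
  have hε : 0 ≤ ε := (mul_nonneg ha hb).trans hab
  have hup : |lam| ≤ a ^ 2 + ε := by
    have := abs_sub_abs_le_abs_sub lam (a ^ 2)
    rw [abs_of_nonneg (sq_nonneg a)] at this
    linarith
  have hsq : |a ^ 2 - r ^ 2| ≤ ε := abs_le.2 ⟨by linarith, by linarith [sq_nonneg b]⟩
  have hb2 : b ^ 2 ≤ 2 * ε := by linarith
  have hdiff : (a - r) ^ 2 ≤ ε :=
    calc (a - r) ^ 2 = |a - r| * |a - r| := by rw [← sq, sq_abs]
      _ ≤ |a - r| * (a + r) :=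
          mul_le_mul_of_nonneg_left (abs_le.2 ⟨by linarith, by linarith⟩) (abs_nonneg _)
      _ = |a ^ 2 - r ^ 2| := by rw [← abs_of_nonneg (add_nonneg ha hr), ← abs_mul]; ring_nf
      _ ≤ ε := hsq
  have hprod : ((a - r) * (a + r)) ^ 2 ≤ ε ^ 2 := by
    rw [← sq_abs, show (a - r) * (a + r) = a ^ 2 - r ^ 2 by ring]
    exact pow_le_pow_left₀ (abs_nonneg _) hsq 2
  have hgap : a ^ 2 + b ^ 2 - (a + r) ^ 2 ≤ ε := by nlinarith
  have hleft : (a - r) ^ 2 * (a ^ 2 + b ^ 2) ≤ 2 * ε ^ 2 :=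
    calc (a - r) ^ 2 * (a ^ 2 + b ^ 2)
        = ((a - r) * (a + r)) ^ 2 + (a - r) ^ 2 * (a ^ 2 + b ^ 2 - (a + r) ^ 2) := by ring
      _ ≤ ε ^ 2 + ε * ε := add_le_add hprod
          ((mul_le_mul_of_nonneg_left hgap (sq_nonneg _)).trans
            (mul_le_mul_of_nonneg_right hdiff hε))
      _ = 2 * ε ^ 2 := by ring
  have hright : b ^ 2 * (a ^ 2 + b ^ 2) ≤ 5 * ε ^ 2 :=
    calc b ^ 2 * (a ^ 2 + b ^ 2) = (a * b) ^ 2 + b ^ 2 * b ^ 2 := by ring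
      _ ≤ ε ^ 2 + (2 * ε) * (2 * ε) := add_le_add
          (pow_le_pow_left₀ (mul_nonneg ha hb) hab 2) (mul_self_le_mul_self (sq_nonneg b) hb2)
      _ = 5 * ε ^ 2 := by ring
  linarith

section InnerProduct

variable {𝕜 E : Type*} [RCLike 𝕜] [NormedAddCommGroup E] [InnerProductSpace 𝕜 E]

local notation "⟪" x ", " y "⟫" => inner 𝕜 x y

theorem inner_sub_inner_smul_eq_zero {v : E} (hv : ‖v‖ = 1) (x : E) :
    ⟪v, x - ⟪v, x⟫ • v⟫ = 0 := by
  rw [inner_sub_right, inner_smul_right, inner_self_eq_norm_sq_to_K, hv]; simp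

theorem norm_smul_add_smul_sub_inner_smul_sq {v : E} (hv : ‖v‖ = 1) (x : E) (β γ : 𝕜) :
    ‖β • v + γ • (x - ⟪v, x⟫ • v)‖ ^ 2 = ‖β‖ ^ 2 + ‖γ‖ ^ 2 * ‖x - ⟪v, x⟫ • v‖ ^ 2 := by
  have h : ⟪β • v, γ • (x - ⟪v, x⟫ • v)⟫ = 0 := by
    rw [inner_smul_left, inner_smul_right, inner_sub_inner_smul_eq_zero hv]; simp
  rw [sq, sq, norm_add_sq_eq_norm_sq_add_norm_sq_of_inner_eq_zero _ _ h, norm_smul, norm_smul, hv]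
  ring

theorem norm_sq_eq_norm_inner_sq_add {v : E} (hv : ‖v‖ = 1) (x : E) :
    ‖x‖ ^ 2 = ‖⟪v, x⟫‖ ^ 2 + ‖x - ⟪v, x⟫ • v‖ ^ 2 := by
  simpa using norm_smul_add_smul_sub_inner_smul_sq hv x ⟪v, x⟫ 1

theorem abs_sub_norm_inner_sq_le {v : E} (hv : ‖v‖ = 1) (x : E) (lam : ℝ) :
    |lam - ‖⟪v, x⟫‖ ^ 2| ≤ ‖(lam : 𝕜) • v - ⟪x, v⟫ • x‖ := by
  have h : ⟪v, (lam : 𝕜) • v - ⟪x, v⟫ • x⟫ = ((lam - ‖⟪v, x⟫‖ ^ 2 : ℝ) : 𝕜) := by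
    rw [inner_sub_right, inner_smul_right, inner_smul_right, inner_self_eq_norm_sq_to_K, hv,
      ← inner_conj_symm, RCLike.conj_mul]
    push_cast; ring
  calc |lam - ‖⟪v, x⟫‖ ^ 2| = ‖⟪v, (lam : 𝕜) • v - ⟪x, v⟫ • x⟫‖ := by
        rw [h, RCLike.norm_ofReal]
    _ ≤ ‖(lam : 𝕜) • v - ⟪x, v⟫ • x‖ := by
        simpa [hv] using norm_inner_le_norm (𝕜 := 𝕜) v ((lam : 𝕜) • v - ⟪x, v⟫ • x)

theorem norm_inner_mul_norm_sub_le {v : E} (hv : ‖v‖ = 1) (x : E) (lam : ℝ) :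
    ‖⟪v, x⟫‖ * ‖x - ⟪v, x⟫ • v‖ ≤ ‖(lam : 𝕜) • v - ⟪x, v⟫ • x‖ := by
  set w := x - ⟪v, x⟫ • v
  set y := (lam : 𝕜) • v - ⟪x, v⟫ • x
  have hwv : ⟪w, v⟫ = 0 := by rw [← inner_conj_symm, inner_sub_inner_smul_eq_zero hv, map_zero]
  have hwx : ⟪w, x⟫ = ((‖w‖ ^ 2 : ℝ) : 𝕜) := by
    conv_lhs => rw [show x = ⟪v, x⟫ • v + w by simp [w]]
    rw [inner_add_right, inner_smul_right, hwv, inner_self_eq_norm_sq_to_K]; simp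
  have hwy : ‖⟪w, y⟫‖ = ‖⟪v, x⟫‖ * ‖w‖ ^ 2 := by
    rw [inner_sub_right, inner_smul_right, inner_smul_right, hwv, hwx]
    simp [norm_inner_symm]
  have hCS : ‖⟪v, x⟫‖ * ‖w‖ ^ 2 ≤ ‖w‖ * ‖y‖ := hwy ▸ norm_inner_le_norm w y
  rcases (norm_nonneg w).eq_or_lt with hw | hw
  · rw [← hw, mul_zero]; exact norm_nonneg y
  · nlinarith

end InnerProduct

section Eigenvalues

variable {𝕜 E : Type*} [RCLike 𝕜] [NormedAddCommGroup E] [InnerProductSpace 𝕜 E]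
  [FiniteDimensional 𝕜 E]

theorem LinearMap.IsSymmetric.exists_hasEigenvalue_abs_sub_mul_norm_le {T : E →ₗ[𝕜] E}
    (hT : T.IsSymmetric) {x : E} (hx : x ≠ 0) (c : ℝ) :
    ∃ μ : ℝ, HasEigenvalue T μ ∧ |μ - c| * ‖x‖ ≤ ‖T x - (c : 𝕜) • x‖ := by
  set b := hT.eigenvectorBasis rfl
  have : Nonempty (Fin (finrank 𝕜 E)) :=
    ⟨⟨0, finrank_pos_iff_exists_ne_zero.2 ⟨x, hx⟩⟩⟩
  obtain ⟨i, -, hi⟩ := Finset.exists_min_image Finset.univ (fun i ↦ |hT.eigenvalues rfl i - c|)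
    Finset.univ_nonempty
  refine ⟨_, hT.hasEigenvalue_eigenvalues rfl i, ?_⟩
  -- in the eigenbasis, `T - c` scales the `j`-th coordinate by `μ j - c`
  have hsq : (|hT.eigenvalues rfl i - c| * ‖x‖) ^ 2 ≤ ‖T x - (c : 𝕜) • x‖ ^ 2 := by
    rw [mul_pow, ← b.repr.norm_map x, ← b.repr.norm_map, EuclideanSpace.norm_sq_eq,
      EuclideanSpace.norm_sq_eq, Finset.mul_sum]
    refine Finset.sum_le_sum fun j _ ↦ ?_
    rw [map_sub, map_smul, PiLp.sub_apply, PiLp.smul_apply, hT.eigenvectorBasis_apply_self_apply,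
      smul_eq_mul, ← sub_mul, norm_mul, mul_pow, ← RCLike.ofReal_sub, RCLike.norm_ofReal]
    exact mul_le_mul_of_nonneg_right (pow_le_pow_left₀ (abs_nonneg _) (hi j (Finset.mem_univ j)) 2)
      (sq_nonneg _)
  exact le_of_pow_le_pow_left₀ two_ne_zero (norm_nonneg _) hsq

end Eigenvalues

theorem Complex.exp_neg_arg_mul_I_mul_self (z : ℂ) : exp (-arg z * I) * z = ‖z‖ := by
  conv_lhs => arg 2; rw [← norm_mul_exp_arg_mul_I z]
  rw [mul_left_comm, ← exp_add, neg_mul, neg_add_cancel, exp_zero, mul_one]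

theorem Complex.exists_mem_Icc_exp_mul_I_eq (θ : ℝ) :
    ∃ φ ∈ Set.Icc 0 (2 * π), exp (φ * I) = exp (θ * I) := by
  refine ⟨toIcoMod two_pi_pos 0 θ, Set.Ico_subset_Icc_self ?_, ?_⟩
  · simpa using toIcoMod_mem_Ico two_pi_pos 0 θ
  · rw [← self_sub_toIcoDiv_zsmul, ofReal_sub, ofReal_zsmul, ofReal_mul, ofReal_ofNat]
    exact exp_mul_I_periodic.sub_zsmul_eq _

section Frobenius

attribute [local instance] Matrix.frobeniusNormedAddCommGroup

variable {m n 𝕜 : Type*} [Fintype m] [Fintype n] [RCLike 𝕜]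

theorem Matrix.norm_toLp_mulVec_le (A : Matrix m n 𝕜) (v : n → 𝕜) :
    ‖WithLp.toLp 2 (A *ᵥ v)‖ ≤ √(∑ i, ∑ j, ‖A i j‖ ^ 2) * ‖WithLp.toLp 2 v‖ := by
  have hA : ‖A‖ = √(∑ i, ∑ j, ‖A i j‖ ^ 2) := by simp [frobenius_norm_def, Real.sqrt_eq_rpow]
  simpa only [← frobenius_norm_replicateCol (ι := Unit), replicateCol_mulVec, hA] using
    frobenius_norm_mul A (replicateCol Unit v)

end Frobenius

section RankOnePerturbation

variable {V : Type*} [NormedAddCommGroup V] [InnerProductSpace ℂ V] [FiniteDimensional ℂ V]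

local notation "⟪" x ", " y "⟫" => inner ℂ x y

theorem LinearMap.IsSymmetric.norm_exp_smul_sub_mul_norm_le {T : V →ₗ[ℂ] V} (hT : T.IsSymmetric)
    {x0 : V} (hx0 : x0 ≠ 0) {ε : ℝ} (hE : ∀ v, ‖T v - ⟪x0, v⟫ • x0‖ ≤ ε * ‖v‖) {lam : ℝ}
    {v1 : V} (hv1 : T v1 = (lam : ℂ) • v1) (hv1n : ‖v1‖ = 1)
    (hmax : ∀ μ : ℝ, HasEigenvalue T μ → |μ| ≤ |lam|) :
    ‖exp (-arg ⟪v1, x0⟫ * I) • x0 - (√|lam| : ℂ) • v1‖ * ‖x0‖ ≤ √7 * ε := by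
  set α := ⟪v1, x0⟫
  set r := √|lam|
  have hres : ‖(lam : ℂ) • v1 - ⟪x0, v1⟫ • x0‖ ≤ ε := by simpa [hv1, hv1n] using hE v1
  have hε : 0 ≤ ε := (norm_nonneg _).trans hres
  have hlow : ‖x0‖ ^ 2 - ε ≤ |lam| := by
    obtain ⟨μ, hμ, hμx0⟩ := hT.exists_hasEigenvalue_abs_sub_mul_norm_le hx0 (‖x0‖ ^ 2)
    have hx0x0 : ⟪x0, x0⟫ = ((‖x0‖ ^ 2 : ℝ) : ℂ) := by
      rw [inner_self_eq_norm_sq_to_K]; push_cast; rfl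
    have hx0res : ‖T x0 - ((‖x0‖ ^ 2 : ℝ) : ℂ) • x0‖ ≤ ε * ‖x0‖ := hx0x0 ▸ hE x0
    have hμ' : |μ - ‖x0‖ ^ 2| ≤ ε :=
      le_of_mul_le_mul_right (hμx0.trans hx0res) (norm_pos_iff.2 hx0)
    linarith [(abs_le.1 hμ').1, le_abs_self μ, hmax μ hμ]
  have hu : exp (-arg α * I) • x0 - (r : ℂ) • v1
      = ((‖α‖ - r : ℝ) : ℂ) • v1 + exp (-arg α * I) • (x0 - α • v1) := by
    rw [smul_sub, smul_smul, exp_neg_arg_mul_I_mul_self]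
    push_cast
    module
  have key := sub_sq_add_sq_mul_le (norm_nonneg α) (norm_nonneg (x0 - α • v1)) (sqrt_nonneg _)
    (sq_sqrt (abs_nonneg lam)) ((abs_sub_norm_inner_sq_le hv1n x0 lam).trans hres)
    ((norm_inner_mul_norm_sub_le hv1n x0 lam).trans hres)
    (norm_sq_eq_norm_inner_sq_add (𝕜 := ℂ) hv1n x0 ▸ hlow)
  have hψ : ‖exp (-arg α * I)‖ = 1 := by rw [← ofReal_neg, norm_exp_ofReal_mul_I]
  rw [← norm_sq_eq_norm_inner_sq_add hv1n x0, ← one_mul (‖x0 - α • v1‖ ^ 2), ← one_pow 2, ← hψ,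
    ← sq_abs, ← Real.norm_eq_abs, ← norm_real, ← norm_smul_add_smul_sub_inner_smul_sq hv1n,
    ← hu, ← mul_pow] at key
  refine le_of_pow_le_pow_left₀ two_ne_zero (by positivity) ?_
  rwa [mul_pow √7, sq_sqrt (by norm_num)]

end RankOnePerturbation

theorem Matrix.toEuclideanLin_vecMulVec_star {n 𝕜 : Type*} [Fintype n] [DecidableEq n] [RCLike 𝕜]
    (x : n → 𝕜) (v : EuclideanSpace 𝕜 n) :
    toEuclideanLin (vecMulVec x (star x)) v = inner 𝕜 (WithLp.toLp 2 x) v • WithLp.toLp 2 x := by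
  rw [← InnerProductSpace.symm_toEuclideanLin_rankOne]
  simp

theorem stmt_15_general (d : ℕ) (x0 : Fin d → ℂ) (hx0 : x0 ≠ 0)
    (X : Matrix (Fin d) (Fin d) ℂ) (hX : X.IsHermitian)
    (η : ℝ)
    (hF : Real.sqrt (∑ i, ∑ j, ‖(X - Matrix.vecMulVec x0 (star x0)) i j‖^2) ≤
      η * ∑ i, ‖x0 i‖^2)
    (lam : ℝ) (v1 : Fin d → ℂ)
    (hv1 : X.mulVec v1 = (lam : ℂ) • v1) (hv1n : ∑ i, ‖v1 i‖^2 = 1)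
    (hmax : ∀ (μ : ℝ) (v : Fin d → ℂ), v ≠ 0 → X.mulVec v = (μ : ℂ) • v → |μ| ≤ |lam|) :
    ∃ θ ∈ Set.Icc (0:ℝ) (2 * π),
      Real.sqrt (∑ i, ‖Complex.exp (θ * Complex.I) * x0 i -
          (Real.sqrt |lam| : ℂ) * v1 i‖^2) ≤
        (1 + 2 * Real.sqrt 2) * η * Real.sqrt (∑ i, ‖x0 i‖^2) := by
  set F := √(∑ i, ∑ j, ‖(X - vecMulVec x0 (star x0)) i j‖ ^ 2)
  set x := WithLp.toLp 2 x0
  have hx : x ≠ 0 := by simpa [x] using hx0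
  have hE : ∀ v, ‖toEuclideanLin X v - inner ℂ x v • x‖ ≤ F * ‖v‖ := fun v ↦ by
    rw [← toEuclideanLin_vecMulVec_star, ← LinearMap.sub_apply, ← map_sub, toLpLin_apply]
    simpa only [WithLp.toLp_ofLp] using norm_toLp_mulVec_le _ (WithLp.ofLp v)
  have hmax' : ∀ μ : ℝ, HasEigenvalue (toEuclideanLin X) μ → |μ| ≤ |lam| := fun μ hμ ↦ by
    obtain ⟨v, hv, hv0⟩ := hμ.exists_hasEigenvector
    exact hmax μ v (by simpa using hv0) (congrArg WithLp.ofLp (mem_eigenspace_iff.1 hv))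
  have hbound := (isSymmetric_toEuclideanLin_iff.2 hX).norm_exp_smul_sub_mul_norm_le
    hx hE (congrArg (WithLp.toLp 2) hv1)
    (by simp [EuclideanSpace.norm_eq, hv1n]) hmax'
  obtain ⟨θ, hθ, hθexp⟩ := exists_mem_Icc_exp_mul_I_eq (-arg (inner ℂ (WithLp.toLp 2 v1) x))
  have hnorm : ∀ y : Fin d → ℂ, √(∑ i, ‖y i‖ ^ 2) = ‖WithLp.toLp 2 y‖ := fun y ↦
    (EuclideanSpace.norm_eq _).symm
  have h7 : √7 ≤ 1 + 2 * √2 :=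
    sqrt_le_iff.2 ⟨by positivity, by nlinarith [sq_sqrt (zero_le_two : (0 : ℝ) ≤ 2), sqrt_nonneg 2]⟩
  refine ⟨θ, hθ, le_of_mul_le_mul_right ?_ (norm_pos_iff.2 hx)⟩
  rw [hnorm, hnorm x0]
  calc _ = ‖exp (θ * I) • x - (√|lam| : ℂ) • WithLp.toLp 2 v1‖ * ‖x‖ := rfl
    _ ≤ √7 * F := by rwa [hθexp, ofReal_neg]
    _ ≤ (1 + 2 * √2) * (η * ‖x‖ ^ 2) := by
        rw [EuclideanSpace.norm_sq_eq]
        gcongr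
    _ = (1 + 2 * √2) * η * ‖x‖ * ‖x‖ := by ring

theorem stmt_15 (d : ℕ) (x0 : Fin d → ℂ) (hx0 : x0 ≠ 0)
    (X : Matrix (Fin d) (Fin d) ℂ) (hX : X.IsHermitian)
    (η : ℝ) (hη : 0 ≤ η)
    (hF : Real.sqrt (∑ i, ∑ j, ‖(X - Matrix.vecMulVec x0 (star x0)) i j‖^2) ≤
      η * ∑ i, ‖x0 i‖^2)
    (lam : ℝ) (v1 : Fin d → ℂ)
    (hv1 : X.mulVec v1 = (lam : ℂ) • v1) (hv1n : ∑ i, ‖v1 i‖^2 = 1)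
    (hmax : ∀ (μ : ℝ) (v : Fin d → ℂ), v ≠ 0 → X.mulVec v = (μ : ℂ) • v → |μ| ≤ |lam|) :
    ∃ θ ∈ Set.Icc (0:ℝ) (2 * π),
      Real.sqrt (∑ i, ‖Complex.exp (θ * Complex.I) * x0 i -
          (Real.sqrt |lam| : ℂ) * v1 i‖^2) ≤
        (1 + 2 * Real.sqrt 2) * η * Real.sqrt (∑ i, ‖x0 i‖^2) :=
  stmt_15_general d x0 hx0 X hX η hF lam v1 hv1 hv1n hmax
end
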